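/- Let V be a finite-dimensional vector space over a field of characteristic 0 and Φ⁻ a skew-symmetric endomorphism of V ⊗ V (i.e., Φ⁻(V⊗V) ⊆ Λ²V and Φ⁻ vanishes on symmetric tensors, viewed as a map to S(V) of degree 2). Then the bilinear bracket {u,v} = Φ⁻(u ⊗ v) on generators extends to a Poisson bracket on the symmetric algebra S(V) if and only if the Schouten square [[Φ⁻, Φ⁻]] annihilates Λ³V, i.e., [[Φ⁻,Φ⁻]](Λ³V) = 0 in S³V. -/

import Mathlib

/- STATEMENT 8: Let V be a finite-dimensional vector space over a field of
characteristic 0 and Φ⁻ a skew-symmetric endomorphism of V ⊗ V.  Then the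
bracket {u,v} = Φ⁻(u⊗v) on generators extends to a Poisson bracket on the
symmetric algebra S(V) if and only if the Schouten square [[Φ⁻,Φ⁻]]
annihilates Λ³V in S³V, i.e. [[Φ⁻,Φ⁻]](Λ³V) lies in the kernel of the
projection V^{⊗3} → S³V.  (S(V) is realised as the polynomial algebra on a
basis of V.) -/

open TensorProduct

variable (k : Type*) [Field k] [CharZero k]
variable (V : Type*) [AddCommGroup V] [Module k V]

/-- Transposition of the first two factors of `V⊗V⊗V`. -/
noncomputable def s12 : V ⊗[k] (V ⊗[k] V) →ₗ[k] V ⊗[k] (V ⊗[k] V) :=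
  (TensorProduct.assoc k V V V).toLinearMap ∘ₗ
    (LinearMap.rTensor V (TensorProduct.comm k V V).toLinearMap) ∘ₗ
    (TensorProduct.assoc k V V V).symm.toLinearMap

/-- Transposition of the last two factors of `V⊗V⊗V`. -/
noncomputable def s23 : V ⊗[k] (V ⊗[k] V) →ₗ[k] V ⊗[k] (V ⊗[k] V) :=
  LinearMap.lTensor V (TensorProduct.comm k V V).toLinearMap

/-- `Φ` acting on the tensor factors 1,2 of `V⊗V⊗V`. -/
noncomputable def e12 (Φ : V ⊗[k] V →ₗ[k] V ⊗[k] V) :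
    V ⊗[k] (V ⊗[k] V) →ₗ[k] V ⊗[k] (V ⊗[k] V) :=
  (TensorProduct.assoc k V V V).toLinearMap ∘ₗ (LinearMap.rTensor V Φ) ∘ₗ
    (TensorProduct.assoc k V V V).symm.toLinearMap

/-- `Φ` acting on the tensor factors 2,3. -/
noncomputable def e23 (Φ : V ⊗[k] V →ₗ[k] V ⊗[k] V) :
    V ⊗[k] (V ⊗[k] V) →ₗ[k] V ⊗[k] (V ⊗[k] V) :=
  LinearMap.lTensor V Φ

/-- `Φ` acting on the tensor factors 1,3. -/
noncomputable def e13 (Φ : V ⊗[k] V →ₗ[k] V ⊗[k] V) :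
    V ⊗[k] (V ⊗[k] V) →ₗ[k] V ⊗[k] (V ⊗[k] V) :=
  (s23 k V) ∘ₗ (e12 k V Φ) ∘ₗ (s23 k V)

/-- The Schouten square `[[Φ,Φ]] = [Φ₁₂,Φ₁₃]+[Φ₁₂,Φ₂₃]+[Φ₁₃,Φ₂₃]` as an
endomorphism of `V⊗V⊗V`. -/
noncomputable def schoutenEnd (Φ : V ⊗[k] V →ₗ[k] V ⊗[k] V) :
    V ⊗[k] (V ⊗[k] V) →ₗ[k] V ⊗[k] (V ⊗[k] V) :=
  (e12 k V Φ ∘ₗ e13 k V Φ - e13 k V Φ ∘ₗ e12 k V Φ) +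
    (e12 k V Φ ∘ₗ e23 k V Φ - e23 k V Φ ∘ₗ e12 k V Φ) +
    (e13 k V Φ ∘ₗ e23 k V Φ - e23 k V Φ ∘ₗ e13 k V Φ)

/-- The antisymmetrizer of `u,v,w` (a generator of `Λ³V ⊆ V^{⊗3}`). -/
noncomputable def altTriple (u v w : V) : V ⊗[k] (V ⊗[k] V) :=
  u ⊗ₜ (v ⊗ₜ w) - u ⊗ₜ (w ⊗ₜ v) - v ⊗ₜ (u ⊗ₜ w) + v ⊗ₜ (w ⊗ₜ u) +
    w ⊗ₜ (u ⊗ₜ v) - w ⊗ₜ (v ⊗ₜ u)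

/-- The kernel of the projection `V^{⊗3} → S³V`. -/
noncomputable def symKernel : Submodule k (V ⊗[k] (V ⊗[k] V)) :=
  LinearMap.range (s12 k V - LinearMap.id) ⊔ LinearMap.range (s23 k V - LinearMap.id)

/-
If `P` is a skew biderivation of a commutative algebra with `P (ι u) (ι v) = μ (Φ (u ⊗ v))`,
then multiplying out the factors of `[[Φ,Φ]] (u ⊗ v ⊗ w)` gives the Jacobiator of
`ι u, ι v, ι w`: the pair `Φ₁₂ + Φ₁₃` acts as the derivation `P (ι u)` on the last two factors,
and similarly for the other two groupings of the six terms. The Jacobiator of a skew bracket is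
alternating, so the antisymmetrizer contributes it six times. In characteristic `0` the kernel of
multiplication `V^{⊗3} → S³V` is exactly `symKernel`, because polarization
`f ↦ ⅙ ∑ (∂ᵢ∂ⱼ∂ₗ f)(0) bᵢ ⊗ bⱼ ⊗ bₗ` inverts it modulo `symKernel`. So the Schouten condition is
the Jacobi identity on generators. Conversely `{f, g} = ∑ πᵢⱼ ∂ᵢ f ∂ⱼ g` with `πᵢⱼ = {bᵢ, bⱼ}` is
a skew biderivation extending the bracket; its Jacobiator is a derivation in each argument, hence
vanishes as soon as it vanishes on the variables.
-/

section TensorMultiplication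

variable {R M A : Type*} [CommRing R] [AddCommGroup M] [Module R M] [CommRing A] [Algebra R A]
  (ι : M →ₗ[R] A)

noncomputable def mulTensor₂ : M ⊗[R] M →ₗ[R] A :=
  LinearMap.mul' R A ∘ₗ map ι ι

noncomputable def mulTensor₃ : M ⊗[R] (M ⊗[R] M) →ₗ[R] A :=
  LinearMap.mul' R A ∘ₗ map ι (mulTensor₂ ι)

@[simp] lemma mulTensor₂_tmul (u v : M) : mulTensor₂ ι (u ⊗ₜ v) = ι u * ι v := by
  simp [mulTensor₂]

@[simp] lemma mulTensor₃_tmul (u : M) (m : M ⊗[R] M) :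
    mulTensor₃ ι (u ⊗ₜ m) = ι u * mulTensor₂ ι m := by
  simp [mulTensor₃]

@[simp] lemma mulTensor₂_comm (m : M ⊗[R] M) :
    mulTensor₂ ι (TensorProduct.comm R M M m) = mulTensor₂ ι m := by
  induction m using TensorProduct.induction_on with
  | zero => simp
  | tmul x y => simp [mul_comm]
  | add x y hx hy => simp [hx, hy]

@[simp] lemma mulTensor₃_assoc (m : M ⊗[R] M) (w : M) :
    mulTensor₃ ι (TensorProduct.assoc R M M M (m ⊗ₜ w)) = mulTensor₂ ι m * ι w := by
  induction m using TensorProduct.induction_on with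
  | zero => simp
  | tmul x y => simp [mul_assoc]
  | add x y hx hy => simp [add_tmul, hx, hy, add_mul]

lemma mulTensor₂_apply_swap_eq_neg {Φ : M ⊗[R] M →ₗ[R] M ⊗[R] M}
    (hΦ : (TensorProduct.comm R M M).toLinearMap ∘ₗ Φ ∘ₗ (TensorProduct.comm R M M).toLinearMap =
      -Φ)
    (u v : M) : mulTensor₂ ι (Φ (v ⊗ₜ u)) = -mulTensor₂ ι (Φ (u ⊗ₜ v)) := by
  have h := congr($hΦ (u ⊗ₜ v))
  simp only [LinearMap.comp_apply, LinearEquiv.coe_coe, comm_tmul, LinearMap.neg_apply] at h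
  rw [← map_neg, ← h, mulTensor₂_comm]

end TensorMultiplication

section Permutations

variable {K W : Type*} [Field K] [AddCommGroup W] [Module K W]

@[simp] lemma s12_tmul (u v w : W) : s12 K W (u ⊗ₜ (v ⊗ₜ w)) = v ⊗ₜ (u ⊗ₜ w) := by
  simp [s12]

@[simp] lemma s23_tmul (u v w : W) : s23 K W (u ⊗ₜ (v ⊗ₜ w)) = u ⊗ₜ (w ⊗ₜ v) := by
  simp [s23]

lemma e12_tmul (Φ : W ⊗[K] W →ₗ[K] W ⊗[K] W) (u v w : W) :
    e12 K W Φ (u ⊗ₜ (v ⊗ₜ w)) = TensorProduct.assoc K W W W (Φ (u ⊗ₜ v) ⊗ₜ w) := by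
  simp [e12]

lemma e13_tmul (Φ : W ⊗[K] W →ₗ[K] W ⊗[K] W) (u v w : W) :
    e13 K W Φ (u ⊗ₜ (v ⊗ₜ w)) = s23 K W (TensorProduct.assoc K W W W (Φ (u ⊗ₜ w) ⊗ₜ v)) := by
  simp [e13, e12]

lemma e23_tmul (Φ : W ⊗[K] W →ₗ[K] W ⊗[K] W) (u : W) (m : W ⊗[K] W) :
    e23 K W Φ (u ⊗ₜ m) = u ⊗ₜ Φ m := by
  simp [e23]

variable {A : Type*} [CommRing A] [Algebra K A] (ι : W →ₗ[K] A)

@[simp] lemma mulTensor₃_s12 (x : W ⊗[K] (W ⊗[K] W)) :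
    mulTensor₃ ι (s12 K W x) = mulTensor₃ ι x := by
  induction x using TensorProduct.induction_on with
  | zero => simp
  | tmul u m =>
    induction m using TensorProduct.induction_on with
    | zero => simp
    | tmul v w => simp [mul_left_comm]
    | add p q hp hq => simp only [tmul_add, map_add, hp, hq]
  | add x y hx hy => simp [hx, hy]

@[simp] lemma mulTensor₃_s23 (x : W ⊗[K] (W ⊗[K] W)) :
    mulTensor₃ ι (s23 K W x) = mulTensor₃ ι x := by
  induction x using TensorProduct.induction_on with
  | zero => simp
  | tmul u m => simp [s23]
  | add x y hx hy => simp [hx, hy]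

lemma symKernel_le_ker_mulTensor₃ : symKernel K W ≤ LinearMap.ker (mulTensor₃ ι) := by
  refine sup_le ?_ ?_ <;> rintro _ ⟨x, rfl⟩ <;> simp

lemma mkQ_symKernel_swap₁₂ (u v w : W) :
    (symKernel K W).mkQ (v ⊗ₜ[K] (u ⊗ₜ[K] w)) = (symKernel K W).mkQ (u ⊗ₜ[K] (v ⊗ₜ[K] w)) :=
  (Submodule.Quotient.eq _).mpr (Submodule.mem_sup_left ⟨u ⊗ₜ[K] (v ⊗ₜ[K] w), by simp⟩)

lemma mkQ_symKernel_swap₂₃ (u v w : W) :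
    (symKernel K W).mkQ (u ⊗ₜ[K] (w ⊗ₜ[K] v)) = (symKernel K W).mkQ (u ⊗ₜ[K] (v ⊗ₜ[K] w)) :=
  (Submodule.Quotient.eq _).mpr (Submodule.mem_sup_right ⟨u ⊗ₜ[K] (v ⊗ₜ[K] w), by simp⟩)

lemma mkQ_symKernel_symmetrize (u v w : W) :
    (symKernel K W).mkQ (w ⊗ₜ[K] (v ⊗ₜ[K] u) + v ⊗ₜ[K] (w ⊗ₜ[K] u) + w ⊗ₜ[K] (u ⊗ₜ[K] v) +
      u ⊗ₜ[K] (w ⊗ₜ[K] v) + v ⊗ₜ[K] (u ⊗ₜ[K] w) + u ⊗ₜ[K] (v ⊗ₜ[K] w)) =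
      (6 : K) • (symKernel K W).mkQ (u ⊗ₜ[K] (v ⊗ₜ[K] w)) := by
  have e₁ := mkQ_symKernel_swap₁₂ (K := K) u v w
  have e₂ := mkQ_symKernel_swap₂₃ (K := K) u v w
  have e₃ := (mkQ_symKernel_swap₂₃ (K := K) v u w).trans e₁
  have e₄ := (mkQ_symKernel_swap₁₂ (K := K) u w v).trans e₂
  have e₅ := (mkQ_symKernel_swap₁₂ (K := K) v w u).trans e₃
  simp only [map_add, e₁, e₂, e₃, e₄, e₅]
  module

end Permutations

section Jacobiator

variable {R A : Type*} [CommRing R] [AddCommGroup A] [Module R A] (P : A →ₗ[R] A →ₗ[R] A)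

def jacobiator (f g h : A) : A := P f (P g h) + P g (P h f) + P h (P f g)

lemma jacobiator_cycle (f g h : A) : jacobiator P g h f = jacobiator P f g h := by
  simp only [jacobiator]; abel

lemma jacobiator_swap (hP : ∀ f g, P f g = -P g f) (f g h : A) :
    jacobiator P f h g = -jacobiator P f g h := by
  simp only [jacobiator, hP h g, hP g f, hP f h, map_neg]; abel

end Jacobiator

section SchoutenJacobi

variable {K W A : Type*} [Field K] [AddCommGroup W] [Module K W] [CommRing A] [Algebra K A]
  {ι : W →ₗ[K] A} {Φ : W ⊗[K] W →ₗ[K] W ⊗[K] W} {P : A →ₗ[K] A →ₗ[K] A}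
  (hP : ∀ f g, P f g = -P g f) (hder : ∀ f g h, P f (g * h) = g * P f h + P f g * h)
  (hgen : ∀ u v : W, P (ι u) (ι v) = mulTensor₂ ι (Φ (u ⊗ₜ v)))

include hder hgen in
lemma mulTensor₃_e12_add_e13 (u : W) (m : W ⊗[K] W) :
    mulTensor₃ ι (e12 K W Φ (u ⊗ₜ m)) + mulTensor₃ ι (e13 K W Φ (u ⊗ₜ m)) =
      P (ι u) (mulTensor₂ ι m) := by
  induction m using TensorProduct.induction_on with
  | zero => simp
  | tmul v w =>
    simp only [e12_tmul, e13_tmul, mulTensor₃_assoc, mulTensor₃_s23, mulTensor₂_tmul, hder, ← hgen]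
    ring
  | add m m' hm hm' => simp only [tmul_add, map_add]; linear_combination hm + hm'

include hP hder hgen in
lemma mulTensor₃_e13_add_e23 (m : W ⊗[K] W) (w : W) :
    mulTensor₃ ι (e13 K W Φ (TensorProduct.assoc K W W W (m ⊗ₜ w))) +
      mulTensor₃ ι (e23 K W Φ (TensorProduct.assoc K W W W (m ⊗ₜ w))) =
      -P (ι w) (mulTensor₂ ι m) := by
  induction m using TensorProduct.induction_on with
  | zero => simp
  | tmul u v =>
    simp only [assoc_tmul, e13_tmul, e23_tmul, mulTensor₃_s23, mulTensor₃_assoc, mulTensor₃_tmul,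
      mulTensor₂_tmul, hder, ← hgen, hP (ι w)]
    ring
  | add m m' hm hm' => simp only [add_tmul, map_add]; linear_combination hm + hm'

include hP hder hgen in
lemma mulTensor₃_e12_sub_e23 (m : W ⊗[K] W) (v : W) :
    mulTensor₃ ι (e12 K W Φ (s23 K W (TensorProduct.assoc K W W W (m ⊗ₜ v)))) -
      mulTensor₃ ι (e23 K W Φ (s23 K W (TensorProduct.assoc K W W W (m ⊗ₜ v)))) =
      -P (ι v) (mulTensor₂ ι m) := by
  induction m using TensorProduct.induction_on with
  | zero => simp
  | tmul u w =>
    simp only [assoc_tmul, s23_tmul, e12_tmul, e23_tmul, mulTensor₃_assoc, mulTensor₃_tmul,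
      mulTensor₂_tmul, hder, ← hgen, hP (ι v) (ι u)]
    ring
  | add m m' hm hm' => simp only [add_tmul, map_add]; linear_combination hm + hm'

include hP hder hgen in
lemma mulTensor₃_schoutenEnd_tmul (u v w : W) :
    mulTensor₃ ι (schoutenEnd K W Φ (u ⊗ₜ (v ⊗ₜ w))) = jacobiator P (ι u) (ι v) (ι w) := by
  have h₁ := mulTensor₃_e12_add_e13 hder hgen u (Φ (v ⊗ₜ w))
  have h₂ := mulTensor₃_e13_add_e23 hP hder hgen (Φ (u ⊗ₜ v)) w
  have h₃ := mulTensor₃_e12_sub_e23 hP hder hgen (Φ (u ⊗ₜ w)) v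
  simp only [schoutenEnd, LinearMap.add_apply, LinearMap.sub_apply, LinearMap.comp_apply, map_add,
    map_sub, e23_tmul, e12_tmul, e13_tmul]
  simp only [← hgen, hP (ι u) (ι w), map_neg] at h₁ h₂ h₃
  simp only [jacobiator]
  linear_combination h₁ - h₂ + h₃

include hP hder hgen in
lemma mulTensor₃_schoutenEnd_altTriple (u v w : W) :
    mulTensor₃ ι (schoutenEnd K W Φ (altTriple K W u v w)) =
      (6 : K) • jacobiator P (ι u) (ι v) (ι w) := by
  have hJ := mulTensor₃_schoutenEnd_tmul hP hder hgen
  simp only [altTriple, map_add, map_sub, hJ]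
  have e₂ : jacobiator P (ι u) (ι w) (ι v) = -jacobiator P (ι u) (ι v) (ι w) :=
    jacobiator_swap P hP _ _ _
  have e₄ : jacobiator P (ι v) (ι w) (ι u) = jacobiator P (ι u) (ι v) (ι w) :=
    jacobiator_cycle P _ _ _
  rw [(jacobiator_cycle P (ι v) (ι u) (ι w)).symm, jacobiator_cycle P (ι v) (ι w) (ι u),
    jacobiator_cycle P (ι u) (ι w) (ι v), e₂, e₄]
  module

end SchoutenJacobi

section Polarization

open MvPolynomial

variable {K W σ : Type*} [Field K] [AddCommGroup W] [Module K W] [DecidableEq σ]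

lemma pderiv_X_eq_C (i j : σ) : pderiv i (X j : MvPolynomial σ K) = C (if j = i then 1 else 0) := by
  rw [pderiv_X, Pi.single_apply]; split_ifs <;> simp

lemma coeff_zero_pderiv_pderiv_pderiv_X_mul_X_mul_X (p q r i j l : σ) :
    coeff 0 (pderiv i (pderiv j (pderiv l (X p * (X q * X r) : MvPolynomial σ K)))) =
      (if p = l then 1 else 0) * ((if q = j then 1 else 0) * (if r = i then 1 else 0) +
        (if r = j then 1 else 0) * (if q = i then 1 else 0)) +
      (if q = l then 1 else 0) * ((if p = j then 1 else 0) * (if r = i then 1 else 0) +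
        (if r = j then 1 else 0) * (if p = i then 1 else 0)) +
      (if r = l then 1 else 0) * ((if p = j then 1 else 0) * (if q = i then 1 else 0) +
        (if q = j then 1 else 0) * (if p = i then 1 else 0)) := by
  simp only [pderiv_mul, pderiv_X_eq_C, pderiv_C, map_add, mul_zero, zero_mul, add_zero, zero_add,
    coeff_add, coeff_C_mul, ← C_mul, coeff_C, if_true]
  ring

variable [Fintype σ] (b : Module.Basis σ K W)

noncomputable def polarize : MvPolynomial σ K →ₗ[K] W ⊗[K] (W ⊗[K] W) :=
  (6 : K)⁻¹ • ∑ i, ∑ j, ∑ l, LinearMap.smulRight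
    (lcoeff K 0 ∘ₗ (pderiv i).toLinearMap ∘ₗ (pderiv j).toLinearMap ∘ₗ (pderiv l).toLinearMap)
    (b i ⊗ₜ (b j ⊗ₜ b l))

lemma polarize_X_mul_X_mul_X (p q r : σ) :
    polarize b (X p * (X q * X r)) = (6 : K)⁻¹ • (b r ⊗ₜ (b q ⊗ₜ b p) + b q ⊗ₜ (b r ⊗ₜ b p) +
      b r ⊗ₜ (b p ⊗ₜ b q) + b p ⊗ₜ (b r ⊗ₜ b q) + b q ⊗ₜ (b p ⊗ₜ b r) + b p ⊗ₜ (b q ⊗ₜ b r)) := by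
  simp only [polarize, LinearMap.smul_apply, LinearMap.coe_sum, Finset.sum_apply,
    LinearMap.smulRight_apply, LinearMap.comp_apply, Derivation.coeFn_coe, lcoeff_apply,
    coeff_zero_pderiv_pderiv_pderiv_X_mul_X_mul_X, add_smul, mul_smul, ite_smul, one_smul,
    zero_smul, Finset.sum_add_distrib, Finset.sum_ite_eq, Finset.mem_univ, if_true]
  abel

lemma ker_mulTensor₃_le_symKernel [CharZero K] {ι : W →ₗ[K] MvPolynomial σ K}
    (hι : ∀ i, ι (b i) = X i) : LinearMap.ker (mulTensor₃ ι) ≤ symKernel K W := by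
  have h : (symKernel K W).mkQ ∘ₗ polarize b ∘ₗ mulTensor₃ ι = (symKernel K W).mkQ :=
    (b.tensorProduct (b.tensorProduct b)).ext fun ⟨p, q, r⟩ => by
      simp only [LinearMap.comp_apply, Module.Basis.tensorProduct_apply, mulTensor₃_tmul,
        mulTensor₂_tmul, hι, polarize_X_mul_X_mul_X, map_smul,
        mkQ_symKernel_symmetrize, smul_smul]
      rw [inv_mul_cancel₀ (by norm_num), one_smul]
  intro x hx
  rw [← Submodule.Quotient.mk_eq_zero, ← Submodule.mkQ_apply, ← h]
  simp [LinearMap.mem_ker.mp hx]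

lemma ker_mulTensor₃_eq_symKernel [CharZero K] {ι : W →ₗ[K] MvPolynomial σ K}
    (hι : ∀ i, ι (b i) = X i) : LinearMap.ker (mulTensor₃ ι) = symKernel K W :=
  le_antisymm (ker_mulTensor₃_le_symKernel b hι) (symKernel_le_ker_mulTensor₃ ι)

end Polarization

section JacobiOnGenerators

open MvPolynomial

variable {R σ : Type*} [CommRing R]
  {P : MvPolynomial σ R →ₗ[R] MvPolynomial σ R →ₗ[R] MvPolynomial σ R}
  (hP : ∀ f g, P f g = -P g f) (hder : ∀ f g h, P f (g * h) = g * P f h + P f g * h)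

include hP hder in
lemma jacobiator_mul_left (f₁ f₂ g h : MvPolynomial σ R) :
    jacobiator P (f₁ * f₂) g h = f₁ * jacobiator P f₂ g h + f₂ * jacobiator P f₁ g h := by
  have hder' : ∀ f₁ f₂ g, P (f₁ * f₂) g = f₁ * P f₂ g + P f₁ g * f₂ := fun f₁ f₂ g => by
    rw [hP, hder, hP f₂, hP f₁]; ring
  simp only [jacobiator, hder, hder', map_add]
  rw [hP f₂ g, hP f₁ g]
  ring

include hP hder in
lemma jacobiator_eq_zero_of_X (hX : ∀ p q r, jacobiator P (X p) (X q) (X r) = 0)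
    (f g h : MvPolynomial σ R) : jacobiator P f g h = 0 := by
  have hext : ∀ g h, (∀ p, jacobiator P (X p) g h = 0) → ∀ f, jacobiator P f g h = 0 := by
    intro g h hg f
    let D : Derivation R (MvPolynomial σ R) (MvPolynomial σ R) := Derivation.mk'
      (P.flip (P g h) + P g ∘ₗ P h + P h ∘ₗ P.flip g)
      (fun f₁ f₂ => jacobiator_mul_left hP hder f₁ f₂ g h)
    exact congr($(MvPolynomial.derivation_ext (D₁ := D) (D₂ := 0) hg) f)
  refine hext g h (fun p => ?_) f
  rw [← jacobiator_cycle]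
  refine hext h (X p) (fun q => ?_) g
  rw [← jacobiator_cycle]
  exact hext (X p) (X q) (fun r => by rw [← jacobiator_cycle]; exact hX p q r) h

end JacobiOnGenerators

section MatrixBracket

open MvPolynomial

variable {R σ : Type*} [CommRing R] [Fintype σ] (π : σ → σ → MvPolynomial σ R)

noncomputable def matrixBracket : MvPolynomial σ R →ₗ[R] MvPolynomial σ R →ₗ[R] MvPolynomial σ R :=
  ∑ i, ∑ j, π i j • (LinearMap.mul R _).compl₁₂ (pderiv i).toLinearMap (pderiv j).toLinearMap

lemma matrixBracket_apply (f g : MvPolynomial σ R) :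
    matrixBracket π f g = ∑ i, ∑ j, π i j * (pderiv i f * pderiv j g) := by
  simp [matrixBracket]

lemma matrixBracket_mul_right (f g h : MvPolynomial σ R) :
    matrixBracket π f (g * h) = g * matrixBracket π f h + matrixBracket π f g * h := by
  simp only [matrixBracket_apply, pderiv_mul, Finset.mul_sum, Finset.sum_mul,
    ← Finset.sum_add_distrib]
  exact Finset.sum_congr rfl fun i _ => Finset.sum_congr rfl fun j _ => by ring

lemma matrixBracket_comm (hπ : ∀ i j, π j i = -π i j) (f g : MvPolynomial σ R) :
    matrixBracket π f g = -matrixBracket π g f := by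
  rw [matrixBracket_apply, matrixBracket_apply, Finset.sum_comm, ← Finset.sum_neg_distrib]
  refine Finset.sum_congr rfl fun i _ => ?_
  rw [← Finset.sum_neg_distrib]
  exact Finset.sum_congr rfl fun j _ => by rw [hπ]; ring

lemma matrixBracket_X_X [DecidableEq σ] (p q : σ) : matrixBracket π (X p) (X q) = π p q := by
  simp [matrixBracket_apply, pderiv_X, Pi.single_apply]

end MatrixBracket

open MvPolynomial in
lemma matrixBracket_eq_mulTensor₂_of_basis {K W σ : Type*} [Field K] [AddCommGroup W] [Module K W]
    [Fintype σ] [DecidableEq σ] (b : Module.Basis σ K W) {ι : W →ₗ[K] MvPolynomial σ K}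
    (hι : ∀ i, ι (b i) = X i) (Φ : W ⊗[K] W →ₗ[K] W ⊗[K] W) (u v : W) :
    matrixBracket (fun i j => mulTensor₂ ι (Φ (b i ⊗ₜ b j))) (ι u) (ι v) =
      mulTensor₂ ι (Φ (u ⊗ₜ v)) := by
  have h : (matrixBracket (fun i j => mulTensor₂ ι (Φ (b i ⊗ₜ b j)))).compl₁₂ ι ι =
      (TensorProduct.mk K W W).compr₂ (mulTensor₂ ι ∘ₗ Φ) :=
    LinearMap.ext_basis b b fun i j => by simp [hι, matrixBracket_X_X]
  exact congr($h u v)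

theorem stmt8 (n : ℕ) (b : Module.Basis (Fin n) k V)
    (Φ : V ⊗[k] V →ₗ[k] V ⊗[k] V)
    (hskew : (TensorProduct.comm k V V).toLinearMap ∘ₗ Φ ∘ₗ
      (TensorProduct.comm k V V).toLinearMap = -Φ) :
    -- S(V) is the polynomial ring on the basis, with V included via ι :
    ∀ ι : V →ₗ[k] MvPolynomial (Fin n) k,
      ι = (Module.Basis.constr b k) (fun i => (MvPolynomial.X i : MvPolynomial (Fin n) k)) →
      ((∃ P : MvPolynomial (Fin n) k →ₗ[k] MvPolynomial (Fin n) k →ₗ[k]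
            MvPolynomial (Fin n) k,
          -- skew-symmetric biderivation satisfying the Jacobi identity:
          (∀ f g, P f g = -(P g f)) ∧
          (∀ f g h, P f (g * h) = g * (P f h) + (P f g) * h) ∧
          (∀ f g h, P f (P g h) + P g (P h f) + P h (P f g) = 0) ∧
          -- whose value on generators is {u,v} = Φ(u⊗v) projected to S²V :
          (∀ u v : V, P (ι u) (ι v) =
            (LinearMap.mul' k (MvPolynomial (Fin n) k))
              ((TensorProduct.map ι ι) (Φ (u ⊗ₜ v))))) ↔
        (∀ u v w : V, schoutenEnd k V Φ (altTriple k V u v w) ∈ symKernel k V)) := by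
  intro ι hι
  have hιb : ∀ i, ι (b i) = MvPolynomial.X i := by simp [hι]
  simp_rw [← ker_mulTensor₃_eq_symKernel b hιb, LinearMap.mem_ker]
  constructor
  · rintro ⟨P, hP, hder, hjac, hgen⟩ u v w
    rw [mulTensor₃_schoutenEnd_altTriple hP hder hgen]
    exact smul_eq_zero_of_right _ (hjac _ _ _)
  · intro hS
    set π := fun i j => mulTensor₂ ι (Φ (b i ⊗ₜ b j))
    have hP := matrixBracket_comm π fun i j => mulTensor₂_apply_swap_eq_neg ι hskew _ _
    have hder := matrixBracket_mul_right π
    have hgen := matrixBracket_eq_mulTensor₂_of_basis b hιb Φ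
    refine ⟨matrixBracket π, hP, hder, jacobiator_eq_zero_of_X hP hder fun p q r => ?_, hgen⟩
    have h6 := hS (b p) (b q) (b r)
    rw [mulTensor₃_schoutenEnd_altTriple hP hder hgen, hιb, hιb, hιb] at h6
    exact (smul_eq_zero.mp h6).resolve_left (by norm_num)
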